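/- arXiv:1108.3126 — 2 statements merged into one kernel-verified Lean document; each statement's English description precedes it below -/
import Mathlib

section
/- Uniqueness of the continuation function: if π,p₀ ⊨ e and k₁, k₂ : dom(π) → dom(π) ∪ {null} both satisfy π ⊨ k₁ and π ⊨ k₂ (with respect to the root p₀), then k₁ = k₂; that is, the continuation function is uniquely determined by the tree structure laid out in π. -/
set_option autoImplicit false

namespace RegexMachines

/-- Regular expressions over an alphabet `α`. -/
inductive RE (α : Type) : Type where
  | eps : RE α
  | ch (a : α) : RE α
  | star (e : RE α) : RE α
  | seq (e₁ e₂ : RE α) : RE α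
  | alt (e₁ e₂ : RE α) : RE α

/-- The big-step matching relation `e ⊨ w`. -/
inductive Matches {α : Type} : RE α → List α → Prop where
  | eps : Matches RE.eps []
  | ch (a : α) : Matches (RE.ch a) [a]
  | seq {e₁ e₂ : RE α} {w₁ w₂ : List α} :
      Matches e₁ w₁ → Matches e₂ w₂ → Matches (RE.seq e₁ e₂) (w₁ ++ w₂)
  | starNil {e : RE α} : Matches (RE.star e) []
  | starCons {e : RE α} {w₁ w₂ : List α} :
      Matches e w₁ → Matches (RE.star e) w₂ → Matches (RE.star e) (w₁ ++ w₂)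
  | altL {e₁ e₂ : RE α} {w : List α} : Matches e₁ w → Matches (RE.alt e₁ e₂) w
  | altR {e₁ e₂ : RE α} {w : List α} : Matches e₂ w → Matches (RE.alt e₁ e₂) w

/-- Configurations `⟨e | k | w⟩` of the EKW machine. -/
abbrev EKWConfig (α : Type) : Type := RE α × List (RE α) × List α

/-- Transitions of the EKW machine. -/
inductive EKWStep {α : Type} : EKWConfig α → EKWConfig α → Prop where
  | altL {e₁ e₂ : RE α} {k : List (RE α)} {w : List α} :
      EKWStep (RE.alt e₁ e₂, k, w) (e₁, k, w)
  | altR {e₁ e₂ : RE α} {k : List (RE α)} {w : List α} :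
      EKWStep (RE.alt e₁ e₂, k, w) (e₂, k, w)
  | seq {e₁ e₂ : RE α} {k : List (RE α)} {w : List α} :
      EKWStep (RE.seq e₁ e₂, k, w) (e₁, e₂ :: k, w)
  | starIn {e : RE α} {k : List (RE α)} {w : List α} :
      EKWStep (RE.star e, k, w) (e, RE.star e :: k, w)
  | starOut {e : RE α} {k : List (RE α)} {w : List α} :
      EKWStep (RE.star e, k, w) (RE.eps, k, w)
  | ch {a : α} {k : List (RE α)} {w : List α} :
      EKWStep (RE.ch a, k, a :: w) (RE.eps, k, w)
  | pop {e : RE α} {k : List (RE α)} {w : List α} :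
      EKWStep (RE.eps, e :: k, w) (e, k, w)

/-- Syntax-tree nodes stored in a heap; pointer arguments are natural numbers. -/
inductive Node (α : Type) : Type where
  | eps : Node α
  | ch (a : α) : Node α
  | alt (p₁ p₂ : ℕ) : Node α
  | seq (p₁ p₂ : ℕ) : Node α
  | star (p₁ : ℕ) : Node α

/-- A heap is a partial function from (non-null) pointers to nodes.
The distinguished null pointer is modelled by `none : Option ℕ` wherever a
pointer-or-null is needed. -/
abbrev Heap (α : Type) : Type := ℕ → Option (Node α)

/-- Disjointness of two heaps (the `⊗` side condition). -/
def hDisj {α : Type} (π₁ π₂ : Heap α) : Prop := ∀ q : ℕ, π₁ q = none ∨ π₂ q = none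

/-- Union of two heaps (`⊗`). -/
def hUnion {α : Type} (π₁ π₂ : Heap α) : Heap α :=
  fun q => (π₁ q).orElse (fun _ => π₂ q)

/-- The singleton heap `p ↦ v`. -/
def singleH {α : Type} (p : ℕ) (v : Node α) : Heap α :=
  fun q => if q = p then some v else none

/-- Domain of a heap. -/
def hDom {α : Type} (π : Heap α) : Set ℕ := { q : ℕ | (π q).isSome }

/-- `dom(π) ∪ {null}` as a set of pointer-or-null values. -/
def domP {α : Type} (π : Heap α) : Set (Option ℕ) :=
  insert none { q : Option ℕ | ∃ n : ℕ, q = some n ∧ (π n).isSome }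

/-- The representation relation `π, p ⊨ e`. -/
inductive HeapRepr {α : Type} : Heap α → ℕ → RE α → Prop where
  | eps {p : ℕ} : HeapRepr (singleH p Node.eps) p RE.eps
  | ch {p : ℕ} {a : α} : HeapRepr (singleH p (Node.ch a)) p (RE.ch a)
  | alt {π π₁ π₂ : Heap α} {p p₁ p₂ : ℕ} {e₁ e₂ : RE α} :
      π = hUnion (singleH p (Node.alt p₁ p₂)) (hUnion π₁ π₂) →
      hDisj (singleH p (Node.alt p₁ p₂)) π₁ →
      hDisj (singleH p (Node.alt p₁ p₂)) π₂ →
      hDisj π₁ π₂ →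
      HeapRepr π₁ p₁ e₁ → HeapRepr π₂ p₂ e₂ → HeapRepr π p (RE.alt e₁ e₂)
  | seq {π π₁ π₂ : Heap α} {p p₁ p₂ : ℕ} {e₁ e₂ : RE α} :
      π = hUnion (singleH p (Node.seq p₁ p₂)) (hUnion π₁ π₂) →
      hDisj (singleH p (Node.seq p₁ p₂)) π₁ →
      hDisj (singleH p (Node.seq p₁ p₂)) π₂ →
      hDisj π₁ π₂ →
      HeapRepr π₁ p₁ e₁ → HeapRepr π₂ p₂ e₂ → HeapRepr π p (RE.seq e₁ e₂)
  | star {π π₁ : Heap α} {p p₁ : ℕ} {e₁ : RE α} :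
      π = hUnion (singleH p (Node.star p₁)) π₁ →
      hDisj (singleH p (Node.star p₁)) π₁ →
      HeapRepr π₁ p₁ e₁ → HeapRepr π p (RE.star e₁)

/-- `π ⊨ k`: the continuation function `k : dom(π) → dom(π) ∪ {null}` (with root `p₀`). -/
def KOk {α : Type} (π : Heap α) (k : ℕ → Option ℕ) (p₀ : ℕ) : Prop :=
  (∀ p : ℕ, (π p).isSome → k p = none ∨ ∃ q : ℕ, k p = some q ∧ (π q).isSome) ∧
  (∀ p q₁ q₂ : ℕ, π p = some (Node.alt q₁ q₂) → k q₁ = k p ∧ k q₂ = k p) ∧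
  (∀ p q₁ q₂ : ℕ, π p = some (Node.seq q₁ q₂) → k q₁ = some q₂ ∧ k q₂ = k p) ∧
  (∀ p q₁ : ℕ, π p = some (Node.star q₁) → k q₁ = some p) ∧
  k p₀ = none

/-- Unlabeled pointer transitions `p ⇀ q` relative to `π` and `k`. -/
inductive PStep {α : Type} (π : Heap α) (k : ℕ → Option ℕ) :
    Option ℕ → Option ℕ → Prop where
  | altL {p q₁ q₂ : ℕ} : π p = some (Node.alt q₁ q₂) → PStep π k (some p) (some q₁)
  | altR {p q₁ q₂ : ℕ} : π p = some (Node.alt q₁ q₂) → PStep π k (some p) (some q₂)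
  | seq {p q₁ q₂ : ℕ} : π p = some (Node.seq q₁ q₂) → PStep π k (some p) (some q₁)
  | starIn {p q₁ : ℕ} : π p = some (Node.star q₁) → PStep π k (some p) (some q₁)
  | starOut {p q₁ : ℕ} : π p = some (Node.star q₁) → PStep π k (some p) (k p)
  | eps {p : ℕ} : π p = some Node.eps → PStep π k (some p) (k p)

/-- Labeled pointer transitions `p ⇀ᵃ k(p)` relative to `π` and `k`. -/
inductive PStepA {α : Type} (π : Heap α) (k : ℕ → Option ℕ) (a : α) :
    Option ℕ → Option ℕ → Prop where
  | ch {p : ℕ} : π p = some (Node.ch a) → PStepA π k a (some p) (k p)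

/-- Transitions of the PWπ machine on configurations `⟨p | w⟩`. -/
inductive PWStep {α : Type} (π : Heap α) (k : ℕ → Option ℕ) :
    Option ℕ × List α → Option ℕ × List α → Prop where
  | silent {p q : Option ℕ} {w : List α} : PStep π k p q → PWStep π k (p, w) (q, w)
  | read {a : α} {p q : Option ℕ} {w : List α} :
      PStepA π k a p q → PWStep π k (p, a :: w) (q, w)

/-- `evolve(S)`: all character nodes reachable from `S` by `⇀*`. -/
def evolve {α : Type} (π : Heap α) (k : ℕ → Option ℕ) (S : Set (Option ℕ)) :
    Set (Option ℕ) :=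
  { q : Option ℕ | ∃ (n : ℕ) (a : α), q = some n ∧ π n = some (Node.ch a) ∧
      ∃ p ∈ S, Relation.ReflTransGen (PStep π k) p q }

/-- The lockstep transition `S ⟹ evolve(S)` on pointer sets. -/
def EvolveRel {α : Type} (π : Heap α) (k : ℕ → Option ℕ)
    (S S' : Set (Option ℕ)) : Prop :=
  S' = evolve π k S

/-- The lockstep transition `S ⟹ᵃ S'` on pointer sets. -/
def CharRel {α : Type} (π : Heap α) (k : ℕ → Option ℕ) (a : α)
    (S S' : Set (Option ℕ)) : Prop :=
  S' = { q : Option ℕ | ∃ p ∈ S, PStepA π k a p q }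

/-- Transitions of the generic lockstep machine on configurations `⟨S | w⟩`. -/
inductive LockStep {α : Type} (π : Heap α) (k : ℕ → Option ℕ) :
    Set (Option ℕ) × List α → Set (Option ℕ) × List α → Prop where
  | evolve {S S' : Set (Option ℕ)} {w : List α} :
      EvolveRel π k S S' → LockStep π k (S, w) (S', w)
  | read {S S' : Set (Option ℕ)} {a : α} {w : List α} :
      CharRel π k a S S' → LockStep π k (S, a :: w) (S', w)

/-- The child relation on pointers of a heap: `q` is a pointer argument of the node at `p`. -/
def Child {α : Type} (π : Heap α) (p q : ℕ) : Prop :=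
  (∃ q₂ : ℕ, π p = some (Node.alt q q₂)) ∨ (∃ q₁ : ℕ, π p = some (Node.alt q₁ q)) ∨
  (∃ q₂ : ℕ, π p = some (Node.seq q q₂)) ∨ (∃ q₁ : ℕ, π p = some (Node.seq q₁ q)) ∨
  π p = some (Node.star q)

/-- The subtree of `π` rooted at `q` represents `e`. -/
def ReprSub {α : Type} (π : Heap α) (q : ℕ) (e : RE α) : Prop :=
  ∃ π₁ π₂ : Heap α, hDisj π₁ π₂ ∧ π = hUnion π₁ π₂ ∧ HeapRepr π₁ q e

/-- `StackOf π k p l`: the continuation stack reconstructed from `p` by following `k` is `l`. -/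
inductive StackOf {α : Type} (π : Heap α) (k : ℕ → Option ℕ) :
    ℕ → List (RE α) → Prop where
  | nil {p : ℕ} : k p = none → StackOf π k p []
  | cons {p q : ℕ} {e' : RE α} {l : List (RE α)} :
      k p = some q → ReprSub π q e' → StackOf π k q l → StackOf π k p (e' :: l)

/-- Processes of the process calculus.  Messages `p̄` are on pointer-or-null channels;
receivers `p.M` listen on non-null pointer channels; `a.M` is an `n`-way sync prefix. -/
inductive Proc (α : Type) : Type where
  | msg (p : Option ℕ) : Proc α
  | par (M₁ M₂ : Proc α) : Proc α
  | recv (p : ℕ) (M : Proc α) : Proc α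
  | sync (a : α) (M : Proc α) : Proc α

/-- Structural congruence: associativity/commutativity of `∥`. -/
inductive PCong {α : Type} : Proc α → Proc α → Prop where
  | refl (M : Proc α) : PCong M M
  | symm {M N : Proc α} : PCong M N → PCong N M
  | trans {M N K : Proc α} : PCong M N → PCong N K → PCong M K
  | parComm (M N : Proc α) : PCong (Proc.par M N) (Proc.par N M)
  | parAssoc (M N K : Proc α) :
      PCong (Proc.par (Proc.par M N) K) (Proc.par M (Proc.par N K))
  | par {M M' N N' : Proc α} :
      PCong M M' → PCong N N' → PCong (Proc.par M N) (Proc.par M' N')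
  | recv (p : ℕ) {M M' : Proc α} : PCong M M' → PCong (Proc.recv p M) (Proc.recv p M')
  | sync (a : α) {M M' : Proc α} : PCong M M' → PCong (Proc.sync a M) (Proc.sync a M')

/-- Silent transitions `M → M'`: handshake communication, closed under parallel
context and structural congruence. -/
inductive PSilent {α : Type} : Proc α → Proc α → Prop where
  | comm (p : ℕ) (M : Proc α) :
      PSilent (Proc.par (Proc.recv p M) (Proc.msg (some p))) M
  | parL {M M' : Proc α} (N : Proc α) :
      PSilent M M' → PSilent (Proc.par M N) (Proc.par M' N)
  | congr {M M₁ M₂ M' : Proc α} :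
      PCong M M₁ → PSilent M₁ M₂ → PCong M₂ M' → PSilent M M'

/-- `parList M [N₁, …, Nₙ] = M ∥ N₁ ∥ ⋯ ∥ Nₙ`. -/
def parList {α : Type} : Proc α → List (Proc α) → Proc α
  | M, [] => M
  | M, N :: l => Proc.par M (parList N l)

/-- Labeled transitions `M →ᵃ M'`: `n`-way synchronization on `a` (discarding the rest),
closed under structural congruence. -/
inductive PLabel {α : Type} (a : α) : Proc α → Proc α → Prop where
  | sync (M₀ : Proc α) (Ms : List (Proc α)) (M' : Proc α) :
      (¬ ∃ M'' M''' : Proc α, PCong M' (Proc.par (Proc.sync a M'') M''')) →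
      (∀ N : Proc α, ¬ PSilent M' N) →
      PLabel a (Proc.par (parList (Proc.sync a M₀) (Ms.map (Proc.sync a))) M')
        (parList M₀ Ms)
  | congr {M M₁ M₂ M' : Proc α} :
      PCong M M₁ → PLabel a M₁ M₂ → PCong M₂ M' → PLabel a M M'

/-- The translation `⟦p⟧π` of a heap node into a process. -/
def transNode {α : Type} (k : ℕ → Option ℕ) (p : ℕ) : Node α → Proc α
  | Node.alt q₁ q₂ => Proc.recv p (Proc.par (Proc.msg (some q₁)) (Proc.msg (some q₂)))
  | Node.seq q₁ _ => Proc.recv p (Proc.msg (some q₁))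
  | Node.star q₁ => Proc.recv p (Proc.par (Proc.msg (some q₁)) (Proc.msg (k p)))
  | Node.eps => Proc.recv p (Proc.msg (k p))
  | Node.ch a => Proc.recv p (Proc.sync a (Proc.msg (k p)))

/-- The process for the node at pointer `p` of heap `π` (dummy if `p ∉ dom(π)`). -/
def nodeProc {α : Type} (π : Heap α) (k : ℕ → Option ℕ) (p : ℕ) : Proc α :=
  match π p with
  | some v => transNode k p v
  | none => Proc.msg none

/-- `M` is (a representation of) the translation `⟦π⟧`: the parallel composition
of `⟦p⟧π` over all `p ∈ dom(π)`. -/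
def HeapProcOf {α : Type} (π : Heap α) (k : ℕ → Option ℕ) (M : Proc α) : Prop :=
  ∃ (p : ℕ) (l : List ℕ), (p :: l).Nodup ∧ (∀ q : ℕ, (π q).isSome ↔ q ∈ p :: l) ∧
    M = parList (nodeProc π k p) (l.map (nodeProc π k))

/-- `M` is (a representation of) `S̄`: the parallel composition of the messages
`p̄` for `p ∈ S`. -/
def MsgsOf {α : Type} (S : Set (Option ℕ)) (M : Proc α) : Prop :=
  ∃ (p : Option ℕ) (l : List (Option ℕ)), (p :: l).Nodup ∧
    (∀ q : Option ℕ, q ∈ S ↔ q ∈ p :: l) ∧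
    M = parList (Proc.msg p) (l.map Proc.msg)

lemma hUnion_isSome {α : Type} (f g : Heap α) (q : ℕ) :
    ((hUnion f g) q).isSome ↔ (f q).isSome ∨ (g q).isSome := by
  cases hf : f q <;> simp [hUnion, Option.orElse, hf]

lemma singleH_eq {α : Type} (p : ℕ) (v : Node α) : singleH p v p = some v := by
  simp [singleH]

lemma knode_unique_aux {α : Type} {π' π : Heap α} {p : ℕ} {e : RE α}
    {k₁ k₂ : ℕ → Option ℕ}
    (h : HeapRepr π' p e)
    (hsub : ∀ q v, π' q = some v → π q = some v)
    (ha₁ : ∀ p q₁ q₂ : ℕ, π p = some (Node.alt q₁ q₂) → k₁ q₁ = k₁ p ∧ k₁ q₂ = k₁ p)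
    (hs₁ : ∀ p q₁ q₂ : ℕ, π p = some (Node.seq q₁ q₂) → k₁ q₁ = some q₂ ∧ k₁ q₂ = k₁ p)
    (ht₁ : ∀ p q₁ : ℕ, π p = some (Node.star q₁) → k₁ q₁ = some p)
    (ha₂ : ∀ p q₁ q₂ : ℕ, π p = some (Node.alt q₁ q₂) → k₂ q₁ = k₂ p ∧ k₂ q₂ = k₂ p)
    (hs₂ : ∀ p q₁ q₂ : ℕ, π p = some (Node.seq q₁ q₂) → k₂ q₁ = some q₂ ∧ k₂ q₂ = k₂ p)
    (ht₂ : ∀ p q₁ : ℕ, π p = some (Node.star q₁) → k₂ q₁ = some p)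
    (hroot : k₁ p = k₂ p) :
    ∀ q, (π' q).isSome → k₁ q = k₂ q := by
  induction h generalizing k₁ k₂ with
  | @eps p =>
    intro q hq
    have : q = p := by
      by_contra hne; simp [singleH, hne] at hq
    subst this; exact hroot
  | @ch p a =>
    intro q hq
    have : q = p := by
      by_contra hne; simp [singleH, hne] at hq
    subst this; exact hroot
  | @alt πh π₁ π₂ p p₁ p₂ e₁ e₂ heq hd₁ hd₂ hd₁₂ hr₁ hr₂ ih₁ ih₂ =>
    subst heq
    have hp : π p = some (Node.alt p₁ p₂) := by
      apply hsub
      simp [hUnion, singleH_eq]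
    have hsub₁ : ∀ q v, π₁ q = some v → π q = some v := by
      intro q v hv
      apply hsub
      have h0 : singleH p (Node.alt p₁ p₂ : Node α) q = none := by
        rcases hd₁ q with h' | h'
        · exact h'
        · rw [hv] at h'; exact absurd h' (by simp)
      simp [hUnion, h0, hv]
    have hsub₂ : ∀ q v, π₂ q = some v → π q = some v := by
      intro q v hv
      apply hsub
      have h0 : singleH p (Node.alt p₁ p₂ : Node α) q = none := by
        rcases hd₂ q with h' | h'
        · exact h'
        · rw [hv] at h'; exact absurd h' (by simp)
      have h1 : π₁ q = none := by
        rcases hd₁₂ q with h' | h'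
        · exact h'
        · rw [hv] at h'; exact absurd h' (by simp)
      simp [hUnion, h0, h1, hv]
    have e₁₁ := (ha₁ p p₁ p₂ hp).1
    have e₁₂ := (ha₁ p p₁ p₂ hp).2
    have e₂₁ := (ha₂ p p₁ p₂ hp).1
    have e₂₂ := (ha₂ p p₁ p₂ hp).2
    have hroot₁ : k₁ p₁ = k₂ p₁ := by rw [e₁₁, e₂₁, hroot]
    have hroot₂ : k₁ p₂ = k₂ p₂ := by rw [e₁₂, e₂₂, hroot]
    have H₁ := ih₁ hsub₁ ha₁ hs₁ ht₁ ha₂ hs₂ ht₂ hroot₁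
    have H₂ := ih₂ hsub₂ ha₁ hs₁ ht₁ ha₂ hs₂ ht₂ hroot₂
    intro q hq
    rw [hUnion_isSome] at hq
    rcases hq with hq | hq
    · have : q = p := by
        by_contra hne; simp [singleH, hne] at hq
      subst this; exact hroot
    · rw [hUnion_isSome] at hq
      rcases hq with hq | hq
      · exact H₁ q hq
      · exact H₂ q hq
  | @seq πh π₁ π₂ p p₁ p₂ e₁ e₂ heq hd₁ hd₂ hd₁₂ hr₁ hr₂ ih₁ ih₂ =>
    subst heq
    have hp : π p = some (Node.seq p₁ p₂) := by
      apply hsub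
      simp [hUnion, singleH_eq]
    have hsub₁ : ∀ q v, π₁ q = some v → π q = some v := by
      intro q v hv
      apply hsub
      have h0 : singleH p (Node.seq p₁ p₂ : Node α) q = none := by
        rcases hd₁ q with h' | h'
        · exact h'
        · rw [hv] at h'; exact absurd h' (by simp)
      simp [hUnion, h0, hv]
    have hsub₂ : ∀ q v, π₂ q = some v → π q = some v := by
      intro q v hv
      apply hsub
      have h0 : singleH p (Node.seq p₁ p₂ : Node α) q = none := by
        rcases hd₂ q with h' | h'
        · exact h'
        · rw [hv] at h'; exact absurd h' (by simp)
      have h1 : π₁ q = none := by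
        rcases hd₁₂ q with h' | h'
        · exact h'
        · rw [hv] at h'; exact absurd h' (by simp)
      simp [hUnion, h0, h1, hv]
    have hroot₁ : k₁ p₁ = k₂ p₁ := by
      rw [(hs₁ p p₁ p₂ hp).1, (hs₂ p p₁ p₂ hp).1]
    have hroot₂ : k₁ p₂ = k₂ p₂ := by
      rw [(hs₁ p p₁ p₂ hp).2, (hs₂ p p₁ p₂ hp).2, hroot]
    have H₁ := ih₁ hsub₁ ha₁ hs₁ ht₁ ha₂ hs₂ ht₂ hroot₁
    have H₂ := ih₂ hsub₂ ha₁ hs₁ ht₁ ha₂ hs₂ ht₂ hroot₂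
    intro q hq
    rw [hUnion_isSome] at hq
    rcases hq with hq | hq
    · have : q = p := by
        by_contra hne; simp [singleH, hne] at hq
      subst this; exact hroot
    · rw [hUnion_isSome] at hq
      rcases hq with hq | hq
      · exact H₁ q hq
      · exact H₂ q hq
  | @star πh π₁ p p₁ e₁ heq hd₁ hr₁ ih₁ =>
    subst heq
    have hp : π p = some (Node.star p₁) := by
      apply hsub
      simp [hUnion, singleH_eq]
    have hsub₁ : ∀ q v, π₁ q = some v → π q = some v := by
      intro q v hv
      apply hsub
      have h0 : singleH p (Node.star p₁ : Node α) q = none := by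
        rcases hd₁ q with h' | h'
        · exact h'
        · rw [hv] at h'; exact absurd h' (by simp)
      simp [hUnion, h0, hv]
    have hroot₁ : k₁ p₁ = k₂ p₁ := by
      rw [ht₁ p p₁ hp, ht₂ p p₁ hp]
    have H₁ := ih₁ hsub₁ ha₁ hs₁ ht₁ ha₂ hs₂ ht₂ hroot₁
    intro q hq
    rw [hUnion_isSome] at hq
    rcases hq with hq | hq
    · have : q = p := by
        by_contra hne; simp [singleH, hne] at hq
      subst this; exact hroot
    · exact H₁ q hq

/-- Uniqueness of the continuation function: if `π, p₀ ⊨ e` and both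
`π ⊨ k₁` and `π ⊨ k₂` (with respect to the root `p₀`), then `k₁ = k₂` as functions
on `dom(π)`. -/
theorem knode_unique {α : Type} [Fintype α] {π : Heap α} {p₀ : ℕ} {e : RE α}
    {k₁ k₂ : ℕ → Option ℕ}
    (h : HeapRepr π p₀ e) (h₁ : KOk π k₁ p₀) (h₂ : KOk π k₂ p₀) :
    ∀ p ∈ hDom π, k₁ p = k₂ p := by
  obtain ⟨_, ha₁, hs₁, ht₁, hn₁⟩ := h₁
  obtain ⟨_, ha₂, hs₂, ht₂, hn₂⟩ := h₂
  intro p hp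
  exact knode_unique_aux h (fun q v hv => hv) ha₁ hs₁ ht₁ ha₂ hs₂ ht₂
    (hn₁.trans hn₂.symm) p hp

end RegexMachines
end

section
/- Simulation between the EKW machine and the PWπ machine: let π be a heap with π,p ⊨ e and π ⊨ k. Then there is a run of the EKW machine ⟨e | [] | w⟩ →* ⟨ε | [] | ε⟩ if and only if there is a run of the PWπ machine ⟨p | w⟩ →* ⟨null | ε⟩. -/
set_option autoImplicit false

namespace RegexMachines

/-! ### Auxiliary machinery for the simulation proof -/

section Aux

variable {α : Type}

/-- Heap inclusion. -/
def Incl (π₁ π : Heap α) : Prop := ∀ n v, π₁ n = some v → π n = some v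

lemma incl_refl (π : Heap α) : Incl π π := fun _ _ hv => hv

lemma incl_trans {π₁ π₂ π₃ : Heap α} (h1 : Incl π₁ π₂) (h2 : Incl π₂ π₃) :
    Incl π₁ π₃ := fun n v hv => h2 n v (h1 n v hv)

lemma singleH_self (p : ℕ) (v : Node α) : singleH p v p = some v := by
  simp [singleH]

lemma incl_union_left {π₁ π₂ : Heap α} : Incl π₁ (hUnion π₁ π₂) := by
  intro n v hv; simp [hUnion, hv]

lemma incl_union_right {π₁ π₂ : Heap α} (hd : hDisj π₁ π₂) :
    Incl π₂ (hUnion π₁ π₂) := by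
  intro n v hv
  rcases hd n with h | h
  · simp [hUnion, h, hv]
  · exact absurd (hv.symm.trans h) (by simp)

lemma hDisj_union {π₀ π₁ π₂ : Heap α} (h1 : hDisj π₀ π₁) (h2 : hDisj π₀ π₂) :
    hDisj π₀ (hUnion π₁ π₂) := by
  intro n
  rcases h1 n with h | h
  · exact Or.inl h
  · rcases h2 n with h' | h'
    · exact Or.inl h'
    · exact Or.inr (by simp [hUnion, h, h'])

lemma incl_reprSub {π₁ π : Heap α} {q : ℕ} {e : RE α}
    (hi : Incl π₁ π) (h : HeapRepr π₁ q e) : ReprSub π q e := by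
  refine ⟨π₁, fun n => if (π₁ n).isSome then none else π n, ?_, ?_, h⟩
  · intro n; cases h' : π₁ n <;> simp [h']
  · funext n
    cases h' : π₁ n with
    | none => simp [hUnion, h']
    | some v => simp [hUnion, h', hi n v h']

lemma reprSub_cases {π : Heap α} {q : ℕ} {e : RE α} (h : ReprSub π q e) :
    (e = RE.eps ∧ π q = some Node.eps) ∨
    (∃ a : α, e = RE.ch a ∧ π q = some (Node.ch a)) ∨
    (∃ (e₁ e₂ : RE α) (q₁ q₂ : ℕ), e = RE.alt e₁ e₂ ∧
      π q = some (Node.alt q₁ q₂) ∧ ReprSub π q₁ e₁ ∧ ReprSub π q₂ e₂) ∨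
    (∃ (e₁ e₂ : RE α) (q₁ q₂ : ℕ), e = RE.seq e₁ e₂ ∧
      π q = some (Node.seq q₁ q₂) ∧ ReprSub π q₁ e₁ ∧ ReprSub π q₂ e₂) ∨
    (∃ (e₁ : RE α) (q₁ : ℕ), e = RE.star e₁ ∧
      π q = some (Node.star q₁) ∧ ReprSub π q₁ e₁) := by
  obtain ⟨πa, πb, hd, rfl, hr⟩ := h
  have hinc : Incl πa (hUnion πa πb) := incl_union_left
  cases hr with
  | eps => exact Or.inl ⟨rfl, hinc _ _ (singleH_self _ _)⟩
  | ch => exact Or.inr (Or.inl ⟨_, rfl, hinc _ _ (singleH_self _ _)⟩)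
  | alt hu d1 d2 d12 h1 h2 =>
    subst hu
    have iu : Incl (hUnion _ _) _ :=
      incl_union_right (π₁ := singleH q (Node.alt _ _)) (hDisj_union d1 d2)
    refine Or.inr (Or.inr (Or.inl ⟨_, _, _, _, rfl,
      hinc _ _ (incl_union_left _ _ (singleH_self _ _)), ?_, ?_⟩))
    · exact incl_reprSub (incl_trans (incl_trans incl_union_left iu) hinc) h1
    · exact incl_reprSub (incl_trans (incl_trans (incl_union_right d12) iu) hinc) h2
  | seq hu d1 d2 d12 h1 h2 =>
    subst hu
    have iu : Incl (hUnion _ _) _ :=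
      incl_union_right (π₁ := singleH q (Node.seq _ _)) (hDisj_union d1 d2)
    refine Or.inr (Or.inr (Or.inr (Or.inl ⟨_, _, _, _, rfl,
      hinc _ _ (incl_union_left _ _ (singleH_self _ _)), ?_, ?_⟩)))
    · exact incl_reprSub (incl_trans (incl_trans incl_union_left iu) hinc) h1
    · exact incl_reprSub (incl_trans (incl_trans (incl_union_right d12) iu) hinc) h2
  | star hu d1 h1 =>
    subst hu
    refine Or.inr (Or.inr (Or.inr (Or.inr ⟨_, _, rfl,
      hinc _ _ (incl_union_left _ _ (singleH_self _ _)), ?_⟩)))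
    exact incl_reprSub (incl_trans (incl_union_right d1) hinc) h1

/-- Per-expression inversion lemmas. -/
lemma reprE_eps {π : Heap α} {q : ℕ} (h : ReprSub π q RE.eps) :
    π q = some Node.eps := by
  rcases reprSub_cases h with ⟨_, hq⟩ | ⟨a, he, _⟩ | ⟨_, _, _, _, he, _⟩ |
    ⟨_, _, _, _, he, _⟩ | ⟨_, _, he, _⟩ <;> first | exact hq | cases he

lemma reprE_ch {π : Heap α} {q : ℕ} {a : α} (h : ReprSub π q (RE.ch a)) :
    π q = some (Node.ch a) := by
  rcases reprSub_cases h with ⟨he, _⟩ | ⟨b, he, hq⟩ | ⟨_, _, _, _, he, _⟩ |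
    ⟨_, _, _, _, he, _⟩ | ⟨_, _, he, _⟩
  · cases he
  · injection he with hb; subst hb; exact hq
  · cases he
  · cases he
  · cases he

lemma reprE_alt {π : Heap α} {q : ℕ} {e₁ e₂ : RE α}
    (h : ReprSub π q (RE.alt e₁ e₂)) :
    ∃ q₁ q₂ : ℕ, π q = some (Node.alt q₁ q₂) ∧ ReprSub π q₁ e₁ ∧ ReprSub π q₂ e₂ := by
  rcases reprSub_cases h with ⟨he, _⟩ | ⟨b, he, _⟩ | ⟨ea, eb, q₁, q₂, he, hq, r1, r2⟩ |
    ⟨_, _, _, _, he, _⟩ | ⟨_, _, he, _⟩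
  · cases he
  · cases he
  · injection he with h1 h2; subst h1; subst h2; exact ⟨q₁, q₂, hq, r1, r2⟩
  · cases he
  · cases he

lemma reprE_seq {π : Heap α} {q : ℕ} {e₁ e₂ : RE α}
    (h : ReprSub π q (RE.seq e₁ e₂)) :
    ∃ q₁ q₂ : ℕ, π q = some (Node.seq q₁ q₂) ∧ ReprSub π q₁ e₁ ∧ ReprSub π q₂ e₂ := by
  rcases reprSub_cases h with ⟨he, _⟩ | ⟨b, he, _⟩ | ⟨_, _, _, _, he, _⟩ |
    ⟨ea, eb, q₁, q₂, he, hq, r1, r2⟩ | ⟨_, _, he, _⟩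
  · cases he
  · cases he
  · cases he
  · injection he with h1 h2; subst h1; subst h2; exact ⟨q₁, q₂, hq, r1, r2⟩
  · cases he

lemma reprE_star {π : Heap α} {q : ℕ} {e₁ : RE α}
    (h : ReprSub π q (RE.star e₁)) :
    ∃ q₁ : ℕ, π q = some (Node.star q₁) ∧ ReprSub π q₁ e₁ := by
  rcases reprSub_cases h with ⟨he, _⟩ | ⟨b, he, _⟩ | ⟨_, _, _, _, he, _⟩ |
    ⟨_, _, _, _, he, _⟩ | ⟨ea, q₁, he, hq, r1⟩
  · cases he
  · cases he
  · cases he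
  · cases he
  · injection he with h1; subst h1; exact ⟨q₁, hq, r1⟩

/-- Per-node inversion lemmas. -/
lemma reprN_eps {π : Heap α} {q : ℕ} {e : RE α} (h : ReprSub π q e)
    (hq : π q = some Node.eps) : e = RE.eps := by
  rcases reprSub_cases h with ⟨he, _⟩ | ⟨a, he, hx⟩ | ⟨_, _, _, _, he, hx, _⟩ |
    ⟨_, _, _, _, he, hx, _⟩ | ⟨_, _, he, hx, _⟩ <;>
    first | exact he | (rw [hq] at hx; cases hx)

lemma reprN_ch {π : Heap α} {q : ℕ} {e : RE α} {a : α} (h : ReprSub π q e)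
    (hq : π q = some (Node.ch a)) : e = RE.ch a := by
  rcases reprSub_cases h with ⟨he, hx⟩ | ⟨b, he, hx⟩ | ⟨_, _, _, _, he, hx, _⟩ |
    ⟨_, _, _, _, he, hx, _⟩ | ⟨_, _, he, hx, _⟩
  · rw [hq] at hx; cases hx
  · rw [hq] at hx; injection hx with hx; cases hx; exact he
  · rw [hq] at hx; cases hx
  · rw [hq] at hx; cases hx
  · rw [hq] at hx; cases hx

lemma reprN_alt {π : Heap α} {q q₁ q₂ : ℕ} {e : RE α} (h : ReprSub π q e)
    (hq : π q = some (Node.alt q₁ q₂)) :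
    ∃ e₁ e₂ : RE α, e = RE.alt e₁ e₂ ∧ ReprSub π q₁ e₁ ∧ ReprSub π q₂ e₂ := by
  rcases reprSub_cases h with ⟨he, hx⟩ | ⟨b, he, hx⟩ | ⟨e₁, e₂, qa, qb, he, hx, r1, r2⟩ |
    ⟨_, _, _, _, he, hx, _⟩ | ⟨_, _, he, hx, _⟩
  · rw [hq] at hx; cases hx
  · rw [hq] at hx; cases hx
  · rw [hq] at hx; injection hx with hx
    injection hx with h1 h2; subst h1; subst h2
    exact ⟨e₁, e₂, he, r1, r2⟩
  · rw [hq] at hx; cases hx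
  · rw [hq] at hx; cases hx

lemma reprN_seq {π : Heap α} {q q₁ q₂ : ℕ} {e : RE α} (h : ReprSub π q e)
    (hq : π q = some (Node.seq q₁ q₂)) :
    ∃ e₁ e₂ : RE α, e = RE.seq e₁ e₂ ∧ ReprSub π q₁ e₁ ∧ ReprSub π q₂ e₂ := by
  rcases reprSub_cases h with ⟨he, hx⟩ | ⟨b, he, hx⟩ | ⟨_, _, _, _, he, hx, _⟩ |
    ⟨e₁, e₂, qa, qb, he, hx, r1, r2⟩ | ⟨_, _, he, hx, _⟩
  · rw [hq] at hx; cases hx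
  · rw [hq] at hx; cases hx
  · rw [hq] at hx; cases hx
  · rw [hq] at hx; injection hx with hx
    injection hx with h1 h2; subst h1; subst h2
    exact ⟨e₁, e₂, he, r1, r2⟩
  · rw [hq] at hx; cases hx

lemma reprN_star {π : Heap α} {q q₁ : ℕ} {e : RE α} (h : ReprSub π q e)
    (hq : π q = some (Node.star q₁)) :
    ∃ e₁ : RE α, e = RE.star e₁ ∧ ReprSub π q₁ e₁ := by
  rcases reprSub_cases h with ⟨he, hx⟩ | ⟨b, he, hx⟩ | ⟨_, _, _, _, he, hx, _⟩ |
    ⟨_, _, _, _, he, hx, _⟩ | ⟨e₁, qa, he, hx, r1⟩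
  · rw [hq] at hx; cases hx
  · rw [hq] at hx; cases hx
  · rw [hq] at hx; cases hx
  · rw [hq] at hx; cases hx
  · rw [hq] at hx; injection hx with hx
    injection hx with h1; subst h1
    exact ⟨e₁, he, r1⟩

/-- A word matched by a stack of expressions. -/
inductive KMatches : List (RE α) → List α → Prop where
  | nil : KMatches [] []
  | cons {e : RE α} {k : List (RE α)} {w₁ w₂ : List α} :
      Matches e w₁ → KMatches k w₂ → KMatches (e :: k) (w₁ ++ w₂)

lemma ekw_consume {e : RE α} {w₁ : List α} (h : Matches e w₁) :
    ∀ (k : List (RE α)) (w₂ : List α),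
      Relation.ReflTransGen EKWStep (e, k, w₁ ++ w₂) (RE.eps, k, w₂) := by
  induction h with
  | eps => intro k w₂; exact Relation.ReflTransGen.refl
  | ch a => intro k w₂; exact Relation.ReflTransGen.single EKWStep.ch
  | seq h1 h2 ih1 ih2 =>
    intro k w₂
    rw [List.append_assoc]
    exact Relation.ReflTransGen.head EKWStep.seq
      ((ih1 _ _).trans (Relation.ReflTransGen.head EKWStep.pop (ih2 _ _)))
  | starNil => intro k w₂; exact Relation.ReflTransGen.single EKWStep.starOut
  | starCons h1 h2 ih1 ih2 =>
    intro k w₂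
    rw [List.append_assoc]
    exact Relation.ReflTransGen.head EKWStep.starIn
      ((ih1 _ _).trans (Relation.ReflTransGen.head EKWStep.pop (ih2 _ _)))
  | altL h ih => intro k w₂; exact Relation.ReflTransGen.head EKWStep.altL (ih _ _)
  | altR h ih => intro k w₂; exact Relation.ReflTransGen.head EKWStep.altR (ih _ _)

lemma ekw_pop {k : List (RE α)} {w : List α} (h : KMatches k w) :
    Relation.ReflTransGen EKWStep (RE.eps, k, w) (RE.eps, [], []) := by
  induction h with
  | nil => exact Relation.ReflTransGen.refl
  | cons h1 h2 ih =>
    exact Relation.ReflTransGen.head EKWStep.pop ((ekw_consume h1 _ _).trans ih)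

lemma ekw_sound {c : EKWConfig α}
    (h : Relation.ReflTransGen EKWStep c (RE.eps, [], [])) :
    ∃ w₁ w₂ : List α, c.2.2 = w₁ ++ w₂ ∧ Matches c.1 w₁ ∧ KMatches c.2.1 w₂ := by
  induction h using Relation.ReflTransGen.head_induction_on with
  | refl => exact ⟨[], [], rfl, Matches.eps, KMatches.nil⟩
  | head step rest ih =>
    cases step with
    | altL =>
      obtain ⟨w₁, w₂, hw, hm, hkm⟩ := ih
      exact ⟨w₁, w₂, hw, Matches.altL hm, hkm⟩
    | altR =>
      obtain ⟨w₁, w₂, hw, hm, hkm⟩ := ih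
      exact ⟨w₁, w₂, hw, Matches.altR hm, hkm⟩
    | seq =>
      obtain ⟨w₁, w', hw, hm, hkm⟩ := ih
      cases hkm with
      | cons hm2 hkm' =>
        exact ⟨_, _, by rw [hw, List.append_assoc], Matches.seq hm hm2, hkm'⟩
    | starIn =>
      obtain ⟨w₁, w', hw, hm, hkm⟩ := ih
      cases hkm with
      | cons hm2 hkm' =>
        exact ⟨_, _, by rw [hw, List.append_assoc], Matches.starCons hm hm2, hkm'⟩
    | starOut =>
      obtain ⟨w₁, w₂, hw, hm, hkm⟩ := ih
      cases hm
      exact ⟨[], w₂, hw, Matches.starNil, hkm⟩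
    | ch =>
      obtain ⟨w₁, w₂, hw, hm, hkm⟩ := ih
      cases hm
      exact ⟨[_], w₂, by simpa using hw, Matches.ch _, hkm⟩
    | pop =>
      obtain ⟨w₁, w₂, hw, hm, hkm⟩ := ih
      exact ⟨[], w₁ ++ w₂, by simpa using hw, Matches.eps, KMatches.cons hm hkm⟩

variable {π : Heap α} {k : ℕ → Option ℕ}

lemma pw_complete
    (hk2 : ∀ p q₁ q₂ : ℕ, π p = some (Node.alt q₁ q₂) → k q₁ = k p ∧ k q₂ = k p)
    (hk3 : ∀ p q₁ q₂ : ℕ, π p = some (Node.seq q₁ q₂) → k q₁ = some q₂ ∧ k q₂ = k p)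
    (hk4 : ∀ p q₁ : ℕ, π p = some (Node.star q₁) → k q₁ = some p) :
    ∀ {e : RE α} {w : List α}, Matches e w → ∀ q : ℕ, ReprSub π q e →
      ∀ w' : List α,
        Relation.ReflTransGen (PWStep π k) (some q, w ++ w') (k q, w') := by
  intro e w h
  induction h with
  | eps =>
    intro q hr w'
    exact Relation.ReflTransGen.single (PWStep.silent (PStep.eps (reprE_eps hr)))
  | ch a =>
    intro q hr w'
    exact Relation.ReflTransGen.single (PWStep.read (PStepA.ch (reprE_ch hr)))
  | seq h1 h2 ih1 ih2 =>
    intro q hr w'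
    obtain ⟨q₁, q₂, hq, r1, r2⟩ := reprE_seq hr
    obtain ⟨hc1, hc2⟩ := hk3 q q₁ q₂ hq
    rw [List.append_assoc]
    refine Relation.ReflTransGen.head (PWStep.silent (PStep.seq hq))
      ((ih1 q₁ r1 _).trans ?_)
    rw [hc1]
    exact hc2 ▸ ih2 q₂ r2 w'
  | starNil =>
    intro q hr w'
    obtain ⟨q₁, hq, r1⟩ := reprE_star hr
    exact Relation.ReflTransGen.single (PWStep.silent (PStep.starOut hq))
  | starCons h1 h2 ih1 ih2 =>
    intro q hr w'
    obtain ⟨q₁, hq, r1⟩ := reprE_star hr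
    have hkq := hk4 q q₁ hq
    rw [List.append_assoc]
    refine Relation.ReflTransGen.head (PWStep.silent (PStep.starIn hq))
      ((ih1 q₁ r1 _).trans ?_)
    rw [hkq]
    exact ih2 q hr w'
  | altL h ih =>
    intro q hr w'
    obtain ⟨q₁, q₂, hq, r1, r2⟩ := reprE_alt hr
    refine Relation.ReflTransGen.head (PWStep.silent (PStep.altL hq)) ?_
    rw [← (hk2 q q₁ q₂ hq).1]
    exact ih q₁ r1 w'
  | altR h ih =>
    intro q hr w'
    obtain ⟨q₁, q₂, hq, r1, r2⟩ := reprE_alt hr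
    refine Relation.ReflTransGen.head (PWStep.silent (PStep.altR hq)) ?_
    rw [← (hk2 q q₁ q₂ hq).2]
    exact ih q₂ r2 w'

lemma stackOf_congr {q q' : ℕ} {l : List (RE α)} (hq : k q' = k q)
    (h : StackOf π k q l) : StackOf π k q' l := by
  cases h with
  | nil h0 => exact StackOf.nil (hq.trans h0)
  | cons h0 hr hs => exact StackOf.cons (hq.trans h0) hr hs

lemma pw_none {w : List α}
    (h : Relation.ReflTransGen (PWStep π k) (none, w) (none, [])) : w = [] := by
  rcases Relation.ReflTransGen.cases_head h with heq | ⟨c, hstep, _⟩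
  · exact congrArg Prod.snd heq
  · cases hstep with
    | silent ps => cases ps
    | read ps => cases ps

lemma pw_sound
    (hk2 : ∀ p q₁ q₂ : ℕ, π p = some (Node.alt q₁ q₂) → k q₁ = k p ∧ k q₂ = k p)
    (hk3 : ∀ p q₁ q₂ : ℕ, π p = some (Node.seq q₁ q₂) → k q₁ = some q₂ ∧ k q₂ = k p)
    (hk4 : ∀ p q₁ : ℕ, π p = some (Node.star q₁) → k q₁ = some p) :
    ∀ {c : Option ℕ × List α},
      Relation.ReflTransGen (PWStep π k) c (none, []) →
      ∀ (q : ℕ) (e : RE α) (l : List (RE α)), c.1 = some q →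
        ReprSub π q e → StackOf π k q l →
        Relation.ReflTransGen EKWStep (e, l, c.2) (RE.eps, [], []) := by
  intro c h
  induction h using Relation.ReflTransGen.head_induction_on with
  | refl => intro q e l hq _ _; exact absurd hq (by simp)
  | head step rest ih =>
    intro q e l hq hr hs
    cases step with
    | silent ps =>
      cases ps with
      | altL hπ =>
        injection hq with hq; subst hq
        obtain ⟨e₁, e₂, rfl, r1, r2⟩ := reprN_alt hr hπ
        exact Relation.ReflTransGen.head EKWStep.altL
          (ih _ e₁ l rfl r1 (stackOf_congr (hk2 _ _ _ hπ).1 hs))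
      | altR hπ =>
        injection hq with hq; subst hq
        obtain ⟨e₁, e₂, rfl, r1, r2⟩ := reprN_alt hr hπ
        exact Relation.ReflTransGen.head EKWStep.altR
          (ih _ e₂ l rfl r2 (stackOf_congr (hk2 _ _ _ hπ).2 hs))
      | seq hπ =>
        injection hq with hq; subst hq
        obtain ⟨e₁, e₂, rfl, r1, r2⟩ := reprN_seq hr hπ
        have hc := hk3 _ _ _ hπ
        exact Relation.ReflTransGen.head EKWStep.seq
          (ih _ e₁ (e₂ :: l) rfl r1
            (StackOf.cons hc.1 r2 (stackOf_congr hc.2 hs)))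
      | starIn hπ =>
        injection hq with hq; subst hq
        obtain ⟨e₁, rfl, r1⟩ := reprN_star hr hπ
        exact Relation.ReflTransGen.head EKWStep.starIn
          (ih _ e₁ (RE.star e₁ :: l) rfl r1 (StackOf.cons (hk4 _ _ hπ) hr hs))
      | @starOut p q₁ hπ =>
        injection hq with hq; subst hq
        obtain ⟨e₁, rfl, r1⟩ := reprN_star hr hπ
        cases hkp : k p with
        | none =>
          rw [hkp] at rest
          have hw := pw_none rest
          subst hw
          cases hs with
          | nil h0 => exact Relation.ReflTransGen.single EKWStep.starOut
          | cons h0 hr' hs' => rw [hkp] at h0; cases h0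
        | some q' =>
          cases hs with
          | nil h0 => rw [hkp] at h0; cases h0
          | cons h0 hr' hs' =>
            rw [hkp] at h0; injection h0 with h0; subst h0
            exact Relation.ReflTransGen.head EKWStep.starOut
              (Relation.ReflTransGen.head EKWStep.pop
                (ih q' _ _ hkp hr' hs'))
      | @eps p hπ =>
        injection hq with hq; subst hq
        have he := reprN_eps hr hπ
        subst he
        cases hkp : k p with
        | none =>
          rw [hkp] at rest
          have hw := pw_none rest
          subst hw
          cases hs with
          | nil h0 => exact Relation.ReflTransGen.refl
          | cons h0 hr' hs' => rw [hkp] at h0; cases h0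
        | some q' =>
          cases hs with
          | nil h0 => rw [hkp] at h0; cases h0
          | cons h0 hr' hs' =>
            rw [hkp] at h0; injection h0 with h0; subst h0
            exact Relation.ReflTransGen.head EKWStep.pop (ih q' _ _ hkp hr' hs')
    | read pa =>
      cases pa with
      | @ch p hπ =>
        injection hq with hq; subst hq
        have he := reprN_ch hr hπ
        subst he
        cases hkp : k p with
        | none =>
          rw [hkp] at rest
          have hw := pw_none rest
          subst hw
          cases hs with
          | nil h0 => exact Relation.ReflTransGen.single EKWStep.ch
          | cons h0 hr' hs' => rw [hkp] at h0; cases h0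
        | some q' =>
          cases hs with
          | nil h0 => rw [hkp] at h0; cases h0
          | cons h0 hr' hs' =>
            rw [hkp] at h0; injection h0 with h0; subst h0
            exact Relation.ReflTransGen.head EKWStep.ch
              (Relation.ReflTransGen.head EKWStep.pop
                (ih q' _ _ hkp hr' hs'))

end Aux

/-- Simulation between the EKW machine and the PWπ machine: with `π, p ⊨ e`
and `π ⊨ k`, there is a run `⟨e | [] | w⟩ →* ⟨ε | [] | ε⟩` of the EKW machine iff there
is a run `⟨p | w⟩ →* ⟨null | ε⟩` of the PWπ machine. -/
theorem ekw_pw_simulation {α : Type} [Fintype α] {π : Heap α} {p : ℕ} {e : RE α}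
    {k : ℕ → Option ℕ}
    (h : HeapRepr π p e) (hk : KOk π k p) (w : List α) :
    Relation.ReflTransGen EKWStep
        ((e, ([] : List (RE α)), w) : EKWConfig α)
        ((RE.eps, ([] : List (RE α)), ([] : List α)) : EKWConfig α) ↔
      Relation.ReflTransGen (PWStep π k) (some p, w) (none, ([] : List α)) := by
  obtain ⟨hk1, hk2, hk3, hk4, hk5⟩ := hk
  have hrs : ReprSub π p e := incl_reprSub (incl_refl π) h
  constructor
  · intro hrun
    obtain ⟨w₁, w₂, hw, hm, hkm⟩ := ekw_sound hrun
    cases hkm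
    have hrp := pw_complete hk2 hk3 hk4 hm p hrs []
    rw [hk5] at hrp
    rw [show w = w₁ ++ [] from hw]
    exact hrp
  · intro hrun
    exact pw_sound hk2 hk3 hk4 hrun p e [] rfl hrs (StackOf.nil hk5)

end RegexMachines
end
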